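/- Let t be a μωT_s-expression of category T and p a μωT_s-expression of category P over Σ (free variables treated as letters), such that no subexpression of t or p denotes the empty set and no subexpression of category T other than the symbol ε denotes {ε}. Then: if t has a subexpression of the form t₁×t₂ with t₂ ≠ ε, the language |t| contains a word which is not well-ordered; and if p has a subexpression of the form t₁×t₂ with t₂ ≠ ε, then |p| contains a pair (u,v) such that either v ≠ ε, or one of u, v is not well-ordered. -/

import Mathlib

/-! ## Countable words over an alphabet -/

/-- A "preword" over `A`: a countable linear order realized as a set of rationals,
together with a labeling of its elements by letters of `A`. -/
structure PreWord (A : Type) : Type where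
  carrier : Set ℚ
  label : carrier → A

namespace PreWord

/-- Two prewords are equivalent iff there is an order isomorphism between their
carriers preserving the labels. -/
def Equiv {A : Type} (u v : PreWord A) : Prop :=
  ∃ f : u.carrier ≃o v.carrier, ∀ q, v.label (f q) = u.label q

theorem Equiv.refl {A : Type} (u : PreWord A) : Equiv u u :=
  ⟨OrderIso.refl _, fun _ => rfl⟩

theorem Equiv.symm {A : Type} {u v : PreWord A} : Equiv u v → Equiv v u := by
  rintro ⟨f, hf⟩
  exact ⟨f.symm, fun q => by rw [← hf (f.symm q), OrderIso.apply_symm_apply]⟩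

theorem Equiv.trans {A : Type} {u v w : PreWord A} : Equiv u v → Equiv v w → Equiv u w := by
  rintro ⟨f, hf⟩ ⟨g, hg⟩
  exact ⟨f.trans g, fun q => by rw [OrderIso.trans_apply, hg, hf]⟩

instance setoid (A : Type) : Setoid (PreWord A) where
  r := Equiv
  iseqv := ⟨Equiv.refl, Equiv.symm, Equiv.trans⟩

end PreWord

/-- A countable word over `A`: an isomorphism class of labeled countable linear orders. -/
def Word (A : Type) : Type := Quotient (PreWord.setoid A)

namespace Word

/-- The word determined by an arbitrary countable linear order `I` with labeling `lab`. -/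
noncomputable def of {I A : Type} [LinearOrder I] [Countable I] (lab : I → A) : Word A :=
  let e : I ↪o ℚ := (Order.embedding_from_countable_to_dense I ℚ).some
  Quotient.mk _ ⟨Set.range e, fun q => lab (Classical.choose q.2)⟩

/-- The empty word. -/
def eps (A : Type) : Word A :=
  Quotient.mk _ ⟨∅, fun q => absurd q.2 (Set.notMem_empty q.1)⟩

/-- The one-letter word. -/
def letter {A : Type} (a : A) : Word A :=
  Quotient.mk _ ⟨{(0 : ℚ)}, fun _ => a⟩

/-- Relabeling of a word along a function. -/
noncomputable def map {A B : Type} (g : A → B) (w : Word A) : Word B :=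
  Quotient.mk _ ⟨(Quotient.out w).carrier, fun q => g ((Quotient.out w).label q)⟩

instance sigmaLexCountable {I : Type} (κ : I → Type) [Countable I] [∀ i, Countable (κ i)] :
    Countable (Σₗ i, κ i) :=
  inferInstanceAs (Countable (Σ i, κ i))

/-- Generalized concatenation `∏_{i ∈ I} w i` of words over a countable linear order `I`:
the word on the lexicographically ordered disjoint sum of the underlying orders. -/
noncomputable def concat {I A : Type} [LinearOrder I] [Countable I] (w : I → Word A) : Word A :=
  Word.of (I := Σₗ i : I, (Quotient.out (w i)).carrier)
    (fun p => (Quotient.out (w (ofLex p).1)).label (ofLex p).2)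

/-- Binary concatenation of words. -/
noncomputable def append {A : Type} (u v : Word A) : Word A :=
  concat (I := Fin 2) ![u, v]

/-- The finite word given by a list of letters. -/
noncomputable def ofList {A : Type} (l : List A) : Word A :=
  Word.of (I := Fin l.length) l.get

/-- Concatenation of a finite list of words. -/
noncomputable def concatList {A : Type} (l : List (Word A)) : Word A :=
  concat (I := Fin l.length) l.get

/-- A word is scattered if its underlying linear order has no suborder isomorphic to `ℚ`,
equivalently there is no order embedding of `ℚ` into it. -/
def IsScattered {A : Type} (w : Word A) : Prop :=
  IsEmpty (ℚ ↪o (Quotient.out w).carrier)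

/-- A word is well-ordered if its underlying linear order has no suborder isomorphic to the
negative integers, i.e. there is no order embedding of `ℕᵒᵈ` into it. -/
def IsWellOrdered {A : Type} (w : Word A) : Prop :=
  IsEmpty (ℕᵒᵈ ↪o (Quotient.out w).carrier)

end Word

/-! ## Languages and their operations -/

namespace Lang

/-- Concatenation of languages. -/
noncomputable def conc {A : Type} (L₁ L₂ : Set (Word A)) : Set (Word A) :=
  {w | ∃ u ∈ L₁, ∃ v ∈ L₂, w = Word.append u v}

/-- ω-power of a language: `L^ω = {∏_{i∈ℕ} w i : ∀ i, w i ∈ L}`. -/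
noncomputable def omegaPow {A : Type} (L : Set (Word A)) : Set (Word A) :=
  {w | ∃ f : ℕ → Word A, (∀ i, f i ∈ L) ∧ w = Word.concat f}

end Lang
/-! ## Pairs of words and their operations -/

namespace PairLang

/-- Product of pairs of words: `(u,v)·(u',v') = (uu', v'v)`. -/
noncomputable def pairMul {A : Type} (p q : Word A × Word A) : Word A × Word A :=
  (Word.append p.1 q.1, Word.append q.2 p.2)

/-- Concatenation of sets of pairs of words. -/
noncomputable def conc {A : Type} (L L' : Set (Word A × Word A)) : Set (Word A × Word A) :=
  {r | ∃ p ∈ L, ∃ q ∈ L', r = pairMul p q}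

/-- Kleene star of a set of pairs of words: `L^* = {(ε,ε)} ∪ L ∪ L·L ∪ ⋯`. -/
noncomputable def star {A : Type} (L : Set (Word A × Word A)) : Set (Word A × Word A) :=
  {r | ∃ l : List (Word A × Word A), (∀ p ∈ l, p ∈ L) ∧
        r = l.foldr pairMul (Word.eps A, Word.eps A)}

instance sumLexCountable : Countable (ℕ ⊕ₗ ℕᵒᵈ) :=
  inferInstanceAs (Countable (ℕ ⊕ ℕᵒᵈ))

/-- The word `∏_{i∈ℕ}(u_i, v_i) = (u₀u₁⋯)(⋯v₁v₀)`: the concatenation of the first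
components in increasing order of `i` followed by the second components in decreasing
order of `i`. -/
noncomputable def omegaWord {A : Type} (f : ℕ → Word A × Word A) : Word A :=
  Word.concat (I := ℕ ⊕ₗ ℕᵒᵈ)
    (fun i => Sum.elim (fun n : ℕ => (f n).1)
      (fun n : ℕᵒᵈ => (f (OrderDual.ofDual n)).2) (ofLex i))

/-- ω-power of a set of pairs of words, a language of words. -/
noncomputable def omegaPow {A : Type} (L : Set (Word A × Word A)) : Set (Word A) :=
  {w | ∃ f : ℕ → Word A × Word A, (∀ i, f i ∈ L) ∧ w = omegaWord f}

/-- `L₁ × L₂ = {(u,v) : u ∈ L₁, v ∈ L₂}`. -/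
def prod {A : Type} (L₁ L₂ : Set (Word A)) : Set (Word A × Word A) :=
  {p | p.1 ∈ L₁ ∧ p.2 ∈ L₂}

end PairLang
/-! ## μωT_s-expressions -/

mutual
  /-- `μωT_s`-expressions of syntactic category `T` over the alphabet `A`:
  `T ::= a | ε | x | T+T | T·T | μx.T | P^ω`. -/
  inductive TS (A : Type) : Type
    | letter : A → TS A
    | eps : TS A
    | var : ℕ → TS A
    | add : TS A → TS A → TS A
    | mul : TS A → TS A → TS A
    | mu : ℕ → TS A → TS A
    | omega : PS A → TS A

  /-- `μωT_s`-expressions of syntactic category `P` over the alphabet `A`: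
  `P ::= T×T | P+P | P·P | P^*`. -/
  inductive PS (A : Type) : Type
    | pair : TS A → TS A → PS A
    | add : PS A → PS A → PS A
    | mul : PS A → PS A → PS A
    | star : PS A → PS A
end

mutual
  /-- The free variables of a `T`-expression. -/
  def TS.free {A : Type} : TS A → Set ℕ
    | .letter _ => ∅
    | .eps => ∅
    | .var x => {x}
    | .add s t => s.free ∪ t.free
    | .mul s t => s.free ∪ t.free
    | .mu x s => s.free \ {x}
    | .omega p => p.free

  /-- The free variables of a `P`-expression. -/
  def PS.free {A : Type} : PS A → Set ℕ
    | .pair s t => s.free ∪ t.free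
    | .add p q => p.free ∪ q.free
    | .mul p q => p.free ∪ q.free
    | .star p => p.free
end

mutual
  /-- The language denoted by a `T`-expression in the environment `ρ`. -/
  noncomputable def TS.den {A : Type} : TS A → (ℕ → Set (Word A)) → Set (Word A)
    | .letter a, _ => {Word.letter a}
    | .eps, _ => {Word.eps A}
    | .var x, ρ => ρ x
    | .add s t, ρ => s.den ρ ∪ t.den ρ
    | .mul s t, ρ => Lang.conc (s.den ρ) (t.den ρ)
    | .mu x s, ρ => sInf {L : Set (Word A) | s.den (Function.update ρ x L) ⊆ L}
    | .omega p, ρ => PairLang.omegaPow (p.den ρ)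

  /-- The set of pairs of words denoted by a `P`-expression in the environment `ρ`. -/
  noncomputable def PS.den {A : Type} : PS A → (ℕ → Set (Word A)) → Set (Word A × Word A)
    | .pair s t, ρ => PairLang.prod (s.den ρ) (t.den ρ)
    | .add p q, ρ => p.den ρ ∪ q.den ρ
    | .mul p q, ρ => PairLang.conc (p.den ρ) (q.den ρ)
    | .star p, ρ => PairLang.star (p.den ρ)
end

mutual
  /-- The `T`-subexpressions of a `T`-expression. -/
  def TS.subT {A : Type} : TS A → Set (TS A)
    | .letter a => {.letter a}
    | .eps => {.eps}
    | .var x => {.var x}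
    | .add s t => insert (.add s t) (s.subT ∪ t.subT)
    | .mul s t => insert (.mul s t) (s.subT ∪ t.subT)
    | .mu x s => insert (.mu x s) s.subT
    | .omega p => insert (.omega p) p.subT

  /-- The `T`-subexpressions of a `P`-expression. -/
  def PS.subT {A : Type} : PS A → Set (TS A)
    | .pair s t => s.subT ∪ t.subT
    | .add p q => p.subT ∪ q.subT
    | .mul p q => p.subT ∪ q.subT
    | .star p => p.subT
end

mutual
  /-- The `P`-subexpressions of a `T`-expression. -/
  def TS.subP {A : Type} : TS A → Set (PS A)
    | .letter _ => ∅
    | .eps => ∅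
    | .var _ => ∅
    | .add s t => s.subP ∪ t.subP
    | .mul s t => s.subP ∪ t.subP
    | .mu _ s => s.subP
    | .omega p => insert p p.subP

  /-- The `P`-subexpressions of a `P`-expression. -/
  def PS.subP {A : Type} : PS A → Set (PS A)
    | .pair s t => insert (.pair s t) (s.subP ∪ t.subP)
    | .add p q => insert (.add p q) (p.subP ∪ q.subP)
    | .mul p q => insert (.mul p q) (p.subP ∪ q.subP)
    | .star p => insert (.star p) p.subP
end

mutual
  /-- Relabeling the letters of a `T`-expression. -/
  def TS.map {A B : Type} (g : A → B) : TS A → TS B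
    | .letter a => .letter (g a)
    | .eps => .eps
    | .var x => .var x
    | .add s t => .add (s.map g) (t.map g)
    | .mul s t => .mul (s.map g) (t.map g)
    | .mu x s => .mu x (s.map g)
    | .omega p => .omega (p.map g)

  /-- Relabeling the letters of a `P`-expression. -/
  def PS.map {A B : Type} (g : A → B) : PS A → PS B
    | .pair s t => .pair (s.map g) (t.map g)
    | .add p q => .add (p.map g) (q.map g)
    | .mul p q => .mul (p.map g) (q.map g)
    | .star p => .star (p.map g)
end

/-- The language denoted by a `T`-expression with its free variables treated as letters:
a language over the alphabet `A ⊕ ℕ` (letters on the left, variables on the right). -/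
noncomputable def TS.denL {A : Type} (t : TS A) : Set (Word (A ⊕ ℕ)) :=
  TS.den (t.map Sum.inl) (fun x => {Word.letter (Sum.inr x)})

/-- The set of pairs of words denoted by a `P`-expression with its free variables treated
as letters. -/
noncomputable def PS.denL {A : Type} (p : PS A) :
    Set (Word (A ⊕ ℕ) × Word (A ⊕ ℕ)) :=
  PS.den (p.map Sum.inl) (fun x => {Word.letter (Sum.inr x)})


/-! Whether a language is nonempty and whether it contains a nonempty word (its *profile*, an
element of `Prop × Prop`) is determined compositionally: the profile of `|t|` is computed from the
profiles of the values of the free variables by an abstract semantics `TS.absDen`, the least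
fixed points of `μ` being carried over through the Galois connection between languages and
profiles. Hence the hypotheses, made for variables read as letters, hold for every environment
in which all variables denote languages of profile `⊤`; in particular inside `μx.s`, where `x`
is bound to the least fixed point, itself of profile `⊤`.

A pair `t₁ × t₂` with `t₂ ≠ ε` then denotes a pair `(u, v)` with `v ≠ ε`. Concatenation with
members of the (nonempty) sibling languages, unions and stars preserve the property "`v ≠ ε`, or
`u` or `v` is not well-ordered", and the first `ω`-power above it turns such a pair into a word
containing `⋯ v v`, which is not well-ordered; above that, non-well-orderedness survives every
operation. -/

namespace Word

variable {A : Type}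

theorem nonempty_orderIso_of {I : Type} [LinearOrder I] [Countable I] (lab : I → A) :
    Nonempty ((Quotient.out (Word.of lab)).carrier ≃o I) :=
  let ⟨f, _⟩ := Quotient.mk_out (s := PreWord.setoid A)
    ⟨Set.range (Order.embedding_from_countable_to_dense I ℚ).some,
      fun q => lab (Classical.choose q.2)⟩
  ⟨f.trans OrderEmbedding.orderIso.symm⟩

theorem eq_eps_iff {w : Word A} : w = eps A ↔ IsEmpty (Quotient.out w).carrier := by
  constructor
  · rintro rfl
    obtain ⟨f, -⟩ := Quotient.mk_out (s := PreWord.setoid A) ⟨∅, fun q => absurd q.2 (Set.notMem_empty q.1)⟩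
    exact f.toEquiv.isEmpty
  · intro h
    rw [← Quotient.out_eq w]
    exact Quotient.sound ⟨OrderIso.ofIsEmpty _ _, isEmptyElim⟩

theorem of_eq_eps_iff {I : Type} [LinearOrder I] [Countable I] (lab : I → A) :
    Word.of lab = eps A ↔ IsEmpty I := by
  obtain ⟨f⟩ := nonempty_orderIso_of lab
  rw [eq_eps_iff]
  exact ⟨fun _ => f.symm.toEquiv.isEmpty, fun _ => f.toEquiv.isEmpty⟩

theorem letter_ne_eps (a : A) : letter a ≠ eps A := by
  rw [Ne, eq_eps_iff, not_isEmpty_iff]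
  obtain ⟨f, -⟩ := Quotient.mk_out (s := PreWord.setoid A) ⟨{(0 : ℚ)}, fun _ => a⟩
  exact ⟨f.symm ⟨0, rfl⟩⟩

theorem concat_eq_eps_iff {I : Type} [LinearOrder I] [Countable I] (w : I → Word A) :
    concat w = eps A ↔ ∀ i, w i = eps A := by
  rw [concat, of_eq_eps_iff]
  simp only [eq_eps_iff]
  exact isEmpty_sigma

theorem nonempty_orderIso_concat {I : Type} [LinearOrder I] [Countable I] (w : I → Word A) :
    Nonempty ((Quotient.out (concat w)).carrier ≃o Σₗ i : I, (Quotient.out (w i)).carrier) :=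
  nonempty_orderIso_of _

theorem not_isWellOrdered_concat_of_not_isWellOrdered {I : Type} [LinearOrder I] [Countable I]
    (w : I → Word A) (i : I) (h : ¬ (w i).IsWellOrdered) : ¬ (concat w).IsWellOrdered := by
  rw [IsWellOrdered, not_isEmpty_iff] at h ⊢
  obtain ⟨g⟩ := h
  obtain ⟨f⟩ := nonempty_orderIso_concat w
  refine ⟨(g.trans ?_).trans f.symm.toOrderEmbedding⟩
  exact OrderEmbedding.ofStrictMono (fun x => toLex ⟨i, x⟩)
    fun _ _ hxy => Sigma.Lex.lt_def.2 (Or.inr ⟨rfl, hxy⟩)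

theorem not_isWellOrdered_concat_of_orderEmbedding {I : Type} [LinearOrder I] [Countable I]
    (w : I → Word A) (e : ℕᵒᵈ ↪o I) (h : ∀ n, w (e n) ≠ eps A) : ¬ (concat w).IsWellOrdered := by
  rw [IsWellOrdered, not_isEmpty_iff]
  obtain ⟨f⟩ := nonempty_orderIso_concat w
  have pt (n : ℕᵒᵈ) : (Quotient.out (w (e n))).carrier :=
    (not_isEmpty_iff.1 (mt eq_eps_iff.2 (h n))).some
  refine ⟨(OrderEmbedding.ofStrictMono (fun n => toLex ⟨e n, pt n⟩) ?_).trans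
    f.symm.toOrderEmbedding⟩
  exact fun _ _ hmn => Sigma.Lex.lt_def.2 (Or.inl (e.strictMono hmn))

theorem append_eq_eps_iff (u v : Word A) : append u v = eps A ↔ u = eps A ∧ v = eps A := by
  rw [append, concat_eq_eps_iff, Fin.forall_fin_two]
  rfl

theorem not_isWellOrdered_append_left {u : Word A} (v : Word A) (h : ¬ u.IsWellOrdered) :
    ¬ (append u v).IsWellOrdered :=
  not_isWellOrdered_concat_of_not_isWellOrdered _ 0 h

theorem not_isWellOrdered_append_right (u : Word A) {v : Word A} (h : ¬ v.IsWellOrdered) :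
    ¬ (append u v).IsWellOrdered :=
  not_isWellOrdered_concat_of_not_isWellOrdered _ 1 h

end Word

namespace PairLang

variable {A : Type}

theorem pairMul_eq_eps_iff (p q : Word A × Word A) :
    pairMul p q = (Word.eps A, Word.eps A) ↔
      p = (Word.eps A, Word.eps A) ∧ q = (Word.eps A, Word.eps A) := by
  simp only [pairMul, Word.append_eq_eps_iff, Prod.ext_iff]
  tauto

theorem omegaWord_eq_eps_iff (f : ℕ → Word A × Word A) :
    omegaWord f = Word.eps A ↔ ∀ n, f n = (Word.eps A, Word.eps A) := by
  simp only [omegaWord, Word.concat_eq_eps_iff, Prod.ext_iff]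
  constructor
  · exact fun h n => ⟨h (toLex (.inl n)), h (toLex (.inr (OrderDual.toDual n)))⟩
  · intro h i
    rcases ofLex i with n | n
    exacts [(h n).1, (h (OrderDual.ofDual n)).2]

/-- The pairs `(u, v)` whose ω-power `(u u ⋯)(⋯ v v)` is not well-ordered. -/
def IllOrdered (r : Word A × Word A) : Prop :=
  r.2 ≠ Word.eps A ∨ ¬ r.1.IsWellOrdered ∨ ¬ r.2.IsWellOrdered

namespace IllOrdered

variable {r : Word A × Word A}

theorem pairMul_left (h : IllOrdered r) (r' : Word A × Word A) : IllOrdered (pairMul r r') := by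
  rcases h with h | h | h
  · exact .inl fun h' => h ((Word.append_eq_eps_iff _ _).1 h').2
  · exact .inr (.inl (Word.not_isWellOrdered_append_left _ h))
  · exact .inr (.inr (Word.not_isWellOrdered_append_right _ h))

theorem pairMul_right (r' : Word A × Word A) (h : IllOrdered r) : IllOrdered (pairMul r' r) := by
  rcases h with h | h | h
  · exact .inl fun h' => h ((Word.append_eq_eps_iff _ _).1 h').1
  · exact .inr (.inl (Word.not_isWellOrdered_append_right _ h))
  · exact .inr (.inr (Word.not_isWellOrdered_append_left _ h))

theorem not_isWellOrdered_omegaWord (h : IllOrdered r) :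
    ¬ (omegaWord fun _ => r).IsWellOrdered := by
  rcases h with h | h | h
  · exact Word.not_isWellOrdered_concat_of_orderEmbedding _
      (OrderEmbedding.ofStrictMono (fun n => toLex (.inr n)) fun _ _ => Sum.Lex.inr_lt_inr_iff.2)
      fun _ => h
  · exact Word.not_isWellOrdered_concat_of_not_isWellOrdered _ (toLex (.inl 0)) h
  · exact Word.not_isWellOrdered_concat_of_not_isWellOrdered _
      (toLex (.inr (OrderDual.toDual 0))) h

end IllOrdered

end PairLang

section Profile

variable {α β γ : Type*}

def profile (z : α) (S : Set α) : Prop × Prop :=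
  (S.Nonempty, ∃ x ∈ S, x ≠ z)

def ofProfile (z : α) (b : Prop × Prop) : Set α :=
  {x | b.1 ∧ (x ≠ z → b.2)}

theorem gc_profile_ofProfile (z : α) : GaloisConnection (profile z) (ofProfile z) := by
  intro S b
  constructor
  · rintro ⟨h₁, h₂⟩ x hx
    exact ⟨h₁ ⟨x, hx⟩, fun hne => h₂ ⟨x, hx, hne⟩⟩
  · intro h
    exact ⟨fun ⟨x, hx⟩ => (h hx).1, fun ⟨x, hx, hne⟩ => (h hx).2 hne⟩

theorem profile_eq_top_iff {z : α} {S : Set α} : profile z S = ⊤ ↔ ∃ x ∈ S, x ≠ z := by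
  refine ⟨fun h => (congrArg Prod.snd h).mpr trivial, fun h => ?_⟩
  obtain ⟨x, hx, -⟩ := id h
  exact Prod.ext (eq_true ⟨x, hx⟩) (eq_true h)

theorem profile_union (z : α) (S T : Set α) : profile z (S ∪ T) = profile z S ⊔ profile z T :=
  Prod.ext (propext Set.union_nonempty)
    (propext (by
      simp only [profile, Set.mem_union, or_and_right, exists_or, Prod.snd_sup, sup_Prop_eq]))

def absMul (a b : Prop × Prop) : Prop × Prop :=
  (a.1 ∧ b.1, a.1 ∧ b.1 ∧ (a.2 ∨ b.2))

theorem absMul_le_absMul {a a' b b' : Prop × Prop} (ha : a ≤ a') (hb : b ≤ b') :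
    absMul a b ≤ absMul a' b' :=
  ⟨And.imp ha.1 hb.1, And.imp ha.1 (And.imp hb.1 (Or.imp ha.2 hb.2))⟩

theorem profile_image2 {x : α} {y : β} {z : γ} (f : α → β → γ)
    (hf : ∀ a b, f a b = z ↔ a = x ∧ b = y) (S : Set α) (T : Set β) :
    profile z (Set.image2 f S T) = absMul (profile x S) (profile y T) := by
  refine Prod.ext (propext Set.image2_nonempty_iff) (propext ⟨?_, ?_⟩)
  · rintro ⟨_, ⟨a, ha, b, hb, rfl⟩, hne⟩
    refine ⟨⟨a, ha⟩, ⟨b, hb⟩, ?_⟩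
    by_contra h
    obtain ⟨hS, hT⟩ := not_or.1 h
    exact hne ((hf a b).2
      ⟨by_contra fun h' => hS ⟨a, ha, h'⟩, by_contra fun h' => hT ⟨b, hb, h'⟩⟩)
  · rintro ⟨⟨a, ha⟩, ⟨b, hb⟩, ⟨a', ha', hne⟩ | ⟨b', hb', hne⟩⟩
    · exact ⟨_, Set.mem_image2_of_mem ha' hb, fun h => hne ((hf _ _).1 h).1⟩
    · exact ⟨_, Set.mem_image2_of_mem ha hb', fun h => hne ((hf _ _).1 h).2⟩

end Profile

theorem Lang.conc_eq_image2 {A : Type} (L M : Set (Word A)) :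
    Lang.conc L M = Set.image2 Word.append L M := by
  ext
  simp only [Lang.conc, Set.mem_image2, eq_comm, Set.mem_ofPred_eq]

namespace PairLang

variable {A : Type}

theorem prod_eq_image2 (L M : Set (Word A)) : prod L M = Set.image2 Prod.mk L M :=
  Set.image2_mk_eq_prod.symm

theorem conc_eq_image2 (L M : Set (Word A × Word A)) : conc L M = Set.image2 pairMul L M := by
  ext
  simp only [conc, Set.mem_image2, eq_comm, Set.mem_ofPred_eq]

theorem profile_omegaPow (P : Set (Word A × Word A)) :
    profile (Word.eps A) (omegaPow P) =
      ((profile (Word.eps A, Word.eps A) P).1,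
        (profile (Word.eps A, Word.eps A) P).1 ∧ (profile (Word.eps A, Word.eps A) P).2) := by
  refine Prod.ext (propext ⟨?_, ?_⟩) (propext ⟨?_, ?_⟩)
  · rintro ⟨_, f, hf, rfl⟩
    exact ⟨f 0, hf 0⟩
  · rintro ⟨r, hr⟩
    exact ⟨_, fun _ => r, fun _ => hr, rfl⟩
  · rintro ⟨_, ⟨f, hf, rfl⟩, hne⟩
    obtain ⟨n, hn⟩ := not_forall.1 (mt (omegaWord_eq_eps_iff f).2 hne)
    exact ⟨⟨f 0, hf 0⟩, f n, hf n, hn⟩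
  · rintro ⟨-, r, hr, hne⟩
    exact ⟨_, ⟨fun _ => r, fun _ => hr, rfl⟩, fun h => hne ((omegaWord_eq_eps_iff _).1 h 0)⟩

theorem foldr_pairMul_eq_eps {l : List (Word A × Word A)}
    (h : ∀ p ∈ l, p = (Word.eps A, Word.eps A)) :
    l.foldr pairMul (Word.eps A, Word.eps A) = (Word.eps A, Word.eps A) := by
  induction l with
  | nil => rfl
  | cons a l ih =>
    rw [List.forall_mem_cons] at h
    exact (pairMul_eq_eps_iff _ _).2 ⟨h.1, ih h.2⟩

theorem profile_star (L : Set (Word A × Word A)) :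
    profile (Word.eps A, Word.eps A) (star L) = (True, (profile (Word.eps A, Word.eps A) L).2) := by
  refine Prod.ext (eq_true ⟨_, [], nofun, rfl⟩) (propext ⟨?_, ?_⟩)
  · rintro ⟨_, ⟨l, hl, rfl⟩, hne⟩
    by_contra h
    exact hne (foldr_pairMul_eq_eps fun p hp => by_contra fun h' => h ⟨p, hl p hp, h'⟩)
  · rintro ⟨p, hp, hne⟩
    exact ⟨_, ⟨[p], by simpa using hp, rfl⟩, fun h => hne ((pairMul_eq_eps_iff _ _).1 h).1⟩

end PairLang

theorem GaloisConnection.l_lfp_eq_lfp {α β : Type*} [CompleteLattice α] [CompleteLattice β]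
    {l : α → β} {u : β → α} (gc : GaloisConnection l u) {f : α →o α} {g : β →o β}
    (h : ∀ a, l (f a) = g (l a)) : l f.lfp = g.lfp :=
  le_antisymm
    (gc.l_le (f.lfp_le (gc.le_u (by rw [h]; exact (g.mono (gc.l_u_le _)).trans g.map_lfp.le))))
    (g.lfp_le (by rw [← h, f.map_lfp]))

mutual
  noncomputable def TS.absDen {A : Type} : TS A → (ℕ → Prop × Prop) → Prop × Prop
    | .letter _, _ => ⊤
    | .eps, _ => (True, False)
    | .var x, σ => σ x
    | .add s t, σ => s.absDen σ ⊔ t.absDen σ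
    | .mul s t, σ => absMul (s.absDen σ) (t.absDen σ)
    | .mu x s, σ => sInf {b | s.absDen (Function.update σ x b) ≤ b}
    | .omega p, σ => ((p.absDen σ).1, (p.absDen σ).1 ∧ (p.absDen σ).2)

  noncomputable def PS.absDen {A : Type} : PS A → (ℕ → Prop × Prop) → Prop × Prop
    | .pair s t, σ => absMul (s.absDen σ) (t.absDen σ)
    | .add p q, σ => p.absDen σ ⊔ q.absDen σ
    | .mul p q, σ => absMul (p.absDen σ) (q.absDen σ)
    | .star p, σ => (True, (p.absDen σ).2)
end

section Semantics

variable {A : Type}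

mutual
  theorem TS.den_mono : ∀ s : TS A, Monotone s.den
    | .letter _ => monotone_const
    | .eps => monotone_const
    | .var x => fun _ _ h => h x
    | .add s t => fun _ _ h => Set.union_subset_union (TS.den_mono s h) (TS.den_mono t h)
    | .mul s t => fun _ _ h => by
        simp only [TS.den, Lang.conc_eq_image2]
        exact Set.image2_subset (TS.den_mono s h) (TS.den_mono t h)
    | .mu _ s => fun _ _ h => sInf_le_sInf fun _ hL =>
        (TS.den_mono s (update_le_update_iff.2 ⟨le_rfl, fun j _ => h j⟩)).trans hL
    | .omega p => fun _ _ h => by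
        rintro _ ⟨f, hf, rfl⟩
        exact ⟨f, fun i => PS.den_mono p h (hf i), rfl⟩

  theorem PS.den_mono : ∀ p : PS A, Monotone p.den
    | .pair s t => fun _ _ h => by
        simp only [PS.den, PairLang.prod_eq_image2]
        exact Set.image2_subset (TS.den_mono s h) (TS.den_mono t h)
    | .add p q => fun _ _ h => Set.union_subset_union (PS.den_mono p h) (PS.den_mono q h)
    | .mul p q => fun _ _ h => by
        simp only [PS.den, PairLang.conc_eq_image2]
        exact Set.image2_subset (PS.den_mono p h) (PS.den_mono q h)
    | .star p => fun _ _ h => by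
        rintro _ ⟨l, hl, rfl⟩
        exact ⟨l, fun r hr => PS.den_mono p h (hl r hr), rfl⟩
end

mutual
  theorem TS.absDen_mono : ∀ s : TS A, Monotone s.absDen
    | .letter _ => monotone_const
    | .eps => monotone_const
    | .var x => fun _ _ h => h x
    | .add s t => fun _ _ h => sup_le_sup (TS.absDen_mono s h) (TS.absDen_mono t h)
    | .mul s t => fun _ _ h => absMul_le_absMul (TS.absDen_mono s h) (TS.absDen_mono t h)
    | .mu _ s => fun _ _ h => sInf_le_sInf fun _ hb =>
        (TS.absDen_mono s (update_le_update_iff.2 ⟨le_rfl, fun j _ => h j⟩)).trans hb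
    | .omega p => fun _ _ h =>
        have hp := PS.absDen_mono p h
        ⟨hp.1, And.imp hp.1 hp.2⟩

  theorem PS.absDen_mono : ∀ p : PS A, Monotone p.absDen
    | .pair s t => fun _ _ h => absMul_le_absMul (TS.absDen_mono s h) (TS.absDen_mono t h)
    | .add p q => fun _ _ h => sup_le_sup (PS.absDen_mono p h) (PS.absDen_mono q h)
    | .mul p q => fun _ _ h => absMul_le_absMul (PS.absDen_mono p h) (PS.absDen_mono q h)
    | .star p => fun _ _ h => ⟨id, (PS.absDen_mono p h).2⟩
end

noncomputable def TS.muMap (x : ℕ) (s : TS A) (ρ : ℕ → Set (Word A)) :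
    Set (Word A) →o Set (Word A) :=
  ⟨fun L => s.den (Function.update ρ x L), s.den_mono.comp Function.update_mono⟩

noncomputable def TS.absMuMap (x : ℕ) (s : TS A) (σ : ℕ → Prop × Prop) :
    Prop × Prop →o Prop × Prop :=
  ⟨fun b => s.absDen (Function.update σ x b), s.absDen_mono.comp Function.update_mono⟩

theorem TS.den_mu (x : ℕ) (s : TS A) (ρ : ℕ → Set (Word A)) :
    (TS.mu x s).den ρ = (TS.muMap x s ρ).lfp :=
  rfl

theorem TS.absDen_mu (x : ℕ) (s : TS A) (σ : ℕ → Prop × Prop) :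
    (TS.mu x s).absDen σ = (TS.absMuMap x s σ).lfp :=
  rfl

theorem TS.den_update_den_mu (x : ℕ) (s : TS A) (ρ : ℕ → Set (Word A)) :
    s.den (Function.update ρ x ((TS.mu x s).den ρ)) = (TS.mu x s).den ρ :=
  (TS.muMap x s ρ).map_lfp

mutual
  theorem TS.profile_den : ∀ (s : TS A) (ρ : ℕ → Set (Word A)),
      profile (Word.eps A) (s.den ρ) = s.absDen (profile (Word.eps A) ∘ ρ)
    | .letter a, _ => profile_eq_top_iff.2 ⟨_, rfl, Word.letter_ne_eps a⟩
    | .eps, _ => Prod.ext (eq_true ⟨_, rfl⟩) (eq_false fun ⟨_, hw, hne⟩ => hne hw)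
    | .var _, _ => rfl
    | .add s t, ρ => by
        rw [TS.den, TS.absDen, profile_union, TS.profile_den s, TS.profile_den t]
    | .mul s t, ρ => by
        rw [TS.den, TS.absDen, Lang.conc_eq_image2, profile_image2 _ Word.append_eq_eps_iff,
          TS.profile_den s, TS.profile_den t]
    | .mu x s, ρ => by
        rw [TS.den_mu, TS.absDen_mu]
        refine (gc_profile_ofProfile _).l_lfp_eq_lfp fun L => ?_
        rw [TS.muMap, TS.absMuMap, OrderHom.coe_mk, OrderHom.coe_mk, TS.profile_den s,
          Function.comp_update]
    | .omega p, ρ => by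
        rw [TS.den, TS.absDen, PairLang.profile_omegaPow, PS.profile_den p]

  theorem PS.profile_den : ∀ (p : PS A) (ρ : ℕ → Set (Word A)),
      profile (Word.eps A, Word.eps A) (p.den ρ) = p.absDen (profile (Word.eps A) ∘ ρ)
    | .pair s t, ρ => by
        rw [PS.den, PS.absDen, PairLang.prod_eq_image2,
          profile_image2 _ fun _ _ => Prod.mk_inj, TS.profile_den s, TS.profile_den t]
    | .add p q, ρ => by
        rw [PS.den, PS.absDen, profile_union, PS.profile_den p, PS.profile_den q]
    | .mul p q, ρ => by
        rw [PS.den, PS.absDen, PairLang.conc_eq_image2,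
          profile_image2 _ PairLang.pairMul_eq_eps_iff, PS.profile_den p, PS.profile_den q]
    | .star p, ρ => by
        rw [PS.den, PS.absDen, PairLang.profile_star, PS.profile_den p]
end

end Semantics

theorem TS.mem_subT_self {A : Type} (s : TS A) : s ∈ s.subT := by
  cases s <;> simp [TS.subT]

theorem PS.mem_subP_self {A : Type} (p : PS A) : p ∈ p.subP := by
  cases p <;> simp [PS.subP]

section Witnesses

variable {A : Type} {ρ : ℕ → Set (Word A)}

theorem TS.profile_den_eq_top (hρ : profile (Word.eps A) ∘ ρ = ⊤) {s : TS A}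
    (hs : s.absDen ⊤ = ⊤) : profile (Word.eps A) (s.den ρ) = ⊤ := by
  rw [TS.profile_den, hρ, hs]

theorem TS.den_nonempty (hρ : profile (Word.eps A) ∘ ρ = ⊤) {s : TS A}
    (hs : s ≠ .eps → s.absDen ⊤ = ⊤) : (s.den ρ).Nonempty := by
  by_cases h : s = .eps
  · subst h
    exact ⟨_, rfl⟩
  · exact (congrArg Prod.fst (TS.profile_den_eq_top hρ (hs h))).mpr trivial

theorem PS.den_nonempty : ∀ {p : PS A}, (∀ s ∈ p.subT, (s.den ρ).Nonempty) → (p.den ρ).Nonempty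
  | .pair s t, h =>
    have ⟨u, hu⟩ := h s (.inl (TS.mem_subT_self s))
    have ⟨v, hv⟩ := h t (.inr (TS.mem_subT_self t))
    ⟨(u, v), hu, hv⟩
  | .add _ _, h => (PS.den_nonempty fun s hs => h s (.inl hs)).mono Set.subset_union_left
  | .mul p q, h =>
    have ⟨r, hr⟩ := PS.den_nonempty (p := p) fun s hs => h s (.inl hs)
    have ⟨r', hr'⟩ := PS.den_nonempty (p := q) fun s hs => h s (.inr hs)
    ⟨_, r, hr, r', hr', rfl⟩
  | .star _, _ => ⟨_, [], nofun, rfl⟩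

variable {t₁ t₂ : TS A}

mutual
  theorem TS.exists_not_isWellOrdered_of_pair_mem (ht₂ : t₂ ≠ .eps) :
      ∀ (t : TS A) (ρ : ℕ → Set (Word A)), profile (Word.eps A) ∘ ρ = ⊤ →
        (∀ s ∈ t.subT, s ≠ .eps → s.absDen ⊤ = ⊤) → PS.pair t₁ t₂ ∈ t.subP →
        ∃ w ∈ t.den ρ, ¬ w.IsWellOrdered
    | .letter _, _, _, _, hmem | .eps, _, _, _, hmem | .var _, _, _, _, hmem =>
      absurd hmem (Set.notMem_empty _)
    | .add s t, ρ, hρ, hsub, hmem => by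
      simp only [TS.subT, Set.mem_insert_iff, Set.mem_union, or_imp, forall_and] at hsub
      obtain ⟨-, hs, ht⟩ := hsub
      rcases hmem with hmem | hmem
      · obtain ⟨w, hw, hbad⟩ := TS.exists_not_isWellOrdered_of_pair_mem ht₂ s ρ hρ hs hmem
        exact ⟨w, .inl hw, hbad⟩
      · obtain ⟨w, hw, hbad⟩ := TS.exists_not_isWellOrdered_of_pair_mem ht₂ t ρ hρ ht hmem
        exact ⟨w, .inr hw, hbad⟩
    | .mul s t, ρ, hρ, hsub, hmem => by
      simp only [TS.subT, Set.mem_insert_iff, Set.mem_union, or_imp, forall_and] at hsub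
      obtain ⟨-, hs, ht⟩ := hsub
      rcases hmem with hmem | hmem
      · obtain ⟨w, hw, hbad⟩ := TS.exists_not_isWellOrdered_of_pair_mem ht₂ s ρ hρ hs hmem
        obtain ⟨v, hv⟩ := TS.den_nonempty hρ (ht t (TS.mem_subT_self t))
        exact ⟨_, ⟨w, hw, v, hv, rfl⟩, Word.not_isWellOrdered_append_left v hbad⟩
      · obtain ⟨w, hw, hbad⟩ := TS.exists_not_isWellOrdered_of_pair_mem ht₂ t ρ hρ ht hmem
        obtain ⟨u, hu⟩ := TS.den_nonempty hρ (hs s (TS.mem_subT_self s))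
        exact ⟨_, ⟨u, hu, w, hw, rfl⟩, Word.not_isWellOrdered_append_right u hbad⟩
    | .mu x s, ρ, hρ, hsub, hmem => by
      simp only [TS.subT, Set.mem_insert_iff, forall_eq_or_imp] at hsub
      obtain ⟨hself, hs⟩ := hsub
      -- `x` is bound to a language of profile `⊤`, so the environment stays of profile `⊤`
      have hρ' : profile (Word.eps A) ∘ Function.update ρ x ((TS.mu x s).den ρ) = ⊤ := by
        rw [Function.comp_update, hρ, TS.profile_den_eq_top hρ (hself nofun)]
        exact Function.update_eq_self_iff.2 rfl
      obtain ⟨w, hw, hbad⟩ := TS.exists_not_isWellOrdered_of_pair_mem ht₂ s _ hρ' hs hmem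
      exact ⟨w, TS.den_update_den_mu x s ρ ▸ hw, hbad⟩
    | .omega p, ρ, hρ, hsub, hmem => by
      simp only [TS.subT, Set.mem_insert_iff, forall_eq_or_imp] at hsub
      have hmem' : PS.pair t₁ t₂ ∈ p.subP := by
        rcases hmem with rfl | hmem
        exacts [PS.mem_subP_self _, hmem]
      obtain ⟨r, hr, hbad⟩ := PS.exists_illOrdered_of_pair_mem ht₂ p ρ hρ hsub.2 hmem'
      exact ⟨_, ⟨fun _ => r, fun _ => hr, rfl⟩, hbad.not_isWellOrdered_omegaWord⟩

  theorem PS.exists_illOrdered_of_pair_mem (ht₂ : t₂ ≠ .eps) :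
      ∀ (p : PS A) (ρ : ℕ → Set (Word A)), profile (Word.eps A) ∘ ρ = ⊤ →
        (∀ s ∈ p.subT, s ≠ .eps → s.absDen ⊤ = ⊤) → PS.pair t₁ t₂ ∈ p.subP →
        ∃ r ∈ p.den ρ, PairLang.IllOrdered r
    | .pair s t, ρ, hρ, hsub, hmem => by
      simp only [PS.subT, Set.mem_union, or_imp, forall_and] at hsub
      obtain ⟨hs, ht⟩ := hsub
      obtain ⟨u, hu⟩ := TS.den_nonempty hρ (hs s (TS.mem_subT_self s))
      obtain ⟨v, hv⟩ := TS.den_nonempty hρ (ht t (TS.mem_subT_self t))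
      rcases hmem with hmem | hmem | hmem
      · obtain ⟨-, rfl⟩ := PS.pair.inj hmem
        obtain ⟨v', hv', hne⟩ :=
          profile_eq_top_iff.1 (TS.profile_den_eq_top hρ (ht _ (TS.mem_subT_self _) ht₂))
        exact ⟨(u, v'), ⟨hu, hv'⟩, .inl hne⟩
      · obtain ⟨w, hw, hbad⟩ := TS.exists_not_isWellOrdered_of_pair_mem ht₂ s ρ hρ hs hmem
        exact ⟨(w, v), ⟨hw, hv⟩, .inr (.inl hbad)⟩
      · obtain ⟨w, hw, hbad⟩ := TS.exists_not_isWellOrdered_of_pair_mem ht₂ t ρ hρ ht hmem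
        exact ⟨(u, w), ⟨hu, hw⟩, .inr (.inr hbad)⟩
    | .add p q, ρ, hρ, hsub, hmem => by
      simp only [PS.subT, Set.mem_union, or_imp, forall_and] at hsub
      obtain ⟨hp, hq⟩ := hsub
      rcases (Set.mem_insert_iff.1 hmem).resolve_left nofun with hmem | hmem
      · obtain ⟨r, hr, hbad⟩ := PS.exists_illOrdered_of_pair_mem ht₂ p ρ hρ hp hmem
        exact ⟨r, .inl hr, hbad⟩
      · obtain ⟨r, hr, hbad⟩ := PS.exists_illOrdered_of_pair_mem ht₂ q ρ hρ hq hmem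
        exact ⟨r, .inr hr, hbad⟩
    | .mul p q, ρ, hρ, hsub, hmem => by
      simp only [PS.subT, Set.mem_union, or_imp, forall_and] at hsub
      obtain ⟨hp, hq⟩ := hsub
      rcases (Set.mem_insert_iff.1 hmem).resolve_left nofun with hmem | hmem
      · obtain ⟨r, hr, hbad⟩ := PS.exists_illOrdered_of_pair_mem ht₂ p ρ hρ hp hmem
        obtain ⟨r', hr'⟩ := PS.den_nonempty fun s hs => TS.den_nonempty hρ (hq s hs)
        exact ⟨_, ⟨r, hr, r', hr', rfl⟩, hbad.pairMul_left r'⟩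
      · obtain ⟨r, hr, hbad⟩ := PS.exists_illOrdered_of_pair_mem ht₂ q ρ hρ hq hmem
        obtain ⟨r', hr'⟩ := PS.den_nonempty fun s hs => TS.den_nonempty hρ (hp s hs)
        exact ⟨_, ⟨r', hr', r, hr, rfl⟩, hbad.pairMul_right r'⟩
    | .star p, ρ, hρ, hsub, hmem => by
      replace hmem := (Set.mem_insert_iff.1 hmem).resolve_left nofun
      obtain ⟨r, hr, hbad⟩ := PS.exists_illOrdered_of_pair_mem ht₂ p ρ hρ hsub hmem
      exact ⟨_, ⟨[r], by simpa using hr, rfl⟩, hbad.pairMul_left _⟩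
end

end Witnesses

mutual
  theorem TS.subT_map {A B : Type} (g : A → B) : ∀ t : TS A, (t.map g).subT = TS.map g '' t.subT
    | .letter _ | .eps | .var _ => by simp [TS.map, TS.subT]
    | .add s t | .mul s t => by
      simp [TS.map, TS.subT, TS.subT_map g s, TS.subT_map g t, Set.image_insert_eq,
        Set.image_union]
    | .mu _ s => by simp [TS.map, TS.subT, TS.subT_map g s, Set.image_insert_eq]
    | .omega p => by simp [TS.map, TS.subT, PS.subT_map g p, Set.image_insert_eq]

  theorem PS.subT_map {A B : Type} (g : A → B) : ∀ p : PS A, (p.map g).subT = TS.map g '' p.subT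
    | .pair s t => by simp [PS.map, PS.subT, TS.subT_map g s, TS.subT_map g t, Set.image_union]
    | .add p q | .mul p q => by
      simp [PS.map, PS.subT, PS.subT_map g p, PS.subT_map g q, Set.image_union]
    | .star p => by simp [PS.map, PS.subT, PS.subT_map g p]
end

mutual
  theorem TS.subP_map {A B : Type} (g : A → B) : ∀ t : TS A, (t.map g).subP = PS.map g '' t.subP
    | .letter _ | .eps | .var _ => (Set.image_empty _).symm
    | .add s t | .mul s t => by
      simp [TS.map, TS.subP, TS.subP_map g s, TS.subP_map g t, Set.image_union]
    | .mu _ s => by simp [TS.map, TS.subP, TS.subP_map g s]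
    | .omega p => by simp [TS.map, TS.subP, PS.subP_map g p, Set.image_insert_eq]

  theorem PS.subP_map {A B : Type} (g : A → B) : ∀ p : PS A, (p.map g).subP = PS.map g '' p.subP
    | .pair s t => by
      simp [PS.map, PS.subP, TS.subP_map g s, TS.subP_map g t, Set.image_insert_eq,
        Set.image_union]
    | .add p q | .mul p q => by
      simp [PS.map, PS.subP, PS.subP_map g p, PS.subP_map g q, Set.image_insert_eq,
        Set.image_union]
    | .star p => by simp [PS.map, PS.subP, PS.subP_map g p, Set.image_insert_eq]
end

theorem TS.map_eq_eps_iff {A B : Type} (s : TS A) (g : A → B) : s.map g = .eps ↔ s = .eps := by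
  cases s <;> simp [TS.map]

section LettersForVariables

variable {A : Type}

theorem profile_comp_letter_inr :
    profile (Word.eps (A ⊕ ℕ)) ∘ (fun x => {Word.letter (Sum.inr x)}) = ⊤ :=
  funext fun _ => profile_eq_top_iff.2 ⟨_, rfl, Word.letter_ne_eps _⟩

theorem TS.absDen_map_inl_eq_top {s : TS A} (hne : s.denL ≠ ∅)
    (hε : s.denL ≠ {Word.eps (A ⊕ ℕ)}) : (s.map (Sum.inl : A → A ⊕ ℕ)).absDen ⊤ = ⊤ := by
  rw [← profile_comp_letter_inr, ← TS.profile_den, profile_eq_top_iff]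
  by_contra h
  exact hε (Set.eq_singleton_iff_nonempty_unique_mem.2
    ⟨Set.nonempty_iff_ne_empty.2 hne, fun w hw => by_contra fun hw' => h ⟨w, hw, hw'⟩⟩)

theorem TS.absDen_eq_top_of_mem_image_map_inl {S : Set (TS A)} (hne : ∀ s ∈ S, s.denL ≠ ∅)
    (hε : ∀ s ∈ S, s ≠ .eps → s.denL ≠ {Word.eps (A ⊕ ℕ)}) :
    ∀ s ∈ TS.map (Sum.inl : A → A ⊕ ℕ) '' S, s ≠ .eps → s.absDen ⊤ = ⊤ := by
  rintro _ ⟨s, hs, rfl⟩ hs'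
  exact TS.absDen_map_inl_eq_top (hne s hs) (hε s hs fun h => hs' ((TS.map_eq_eps_iff s _).2 h))

end LettersForVariables

/-- **Claim A.** Let `t`, `p` be `μωT_s`-expressions of categories `T`, `P` (free
variables treated as letters) such that no subexpression of `t` or `p` denotes the empty
set and no subexpression of category `T` other than `ε` denotes `{ε}`. If `t` has a
subexpression `t₁ × t₂` with `t₂ ≠ ε`, then `|t|` contains a word that is not
well-ordered; if `p` has a subexpression `t₁ × t₂` with `t₂ ≠ ε`, then `|p|` contains a
pair `(u,v)` with `v ≠ ε` or one of `u`, `v` not well-ordered. -/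
theorem claimA (Alph : Type) [Fintype Alph] [Nonempty Alph] (t : TS Alph) (p : PS Alph)
    (htTempty : ∀ s ∈ t.subT, s.denL ≠ ∅) (htPempty : ∀ q ∈ t.subP, q.denL ≠ ∅)
    (hpTempty : ∀ s ∈ p.subT, s.denL ≠ ∅) (hpPempty : ∀ q ∈ p.subP, q.denL ≠ ∅)
    (htε : ∀ s ∈ t.subT, s ≠ TS.eps → s.denL ≠ {Word.eps (Alph ⊕ ℕ)})
    (hpε : ∀ s ∈ p.subT, s ≠ TS.eps → s.denL ≠ {Word.eps (Alph ⊕ ℕ)}) :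
    ((∃ t₁ t₂ : TS Alph, PS.pair t₁ t₂ ∈ t.subP ∧ t₂ ≠ TS.eps) →
      ∃ w ∈ t.denL, ¬ w.IsWellOrdered) ∧
    ((∃ t₁ t₂ : TS Alph, PS.pair t₁ t₂ ∈ p.subP ∧ t₂ ≠ TS.eps) →
      ∃ r ∈ p.denL, r.2 ≠ Word.eps (Alph ⊕ ℕ) ∨
        ¬ r.1.IsWellOrdered ∨ ¬ r.2.IsWellOrdered) := by
  refine ⟨fun ⟨t₁, t₂, hmem, ht₂⟩ => ?_, fun ⟨t₁, t₂, hmem, ht₂⟩ => ?_⟩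
  · refine TS.exists_not_isWellOrdered_of_pair_mem (t₁ := t₁.map Sum.inl)
      ((TS.map_eq_eps_iff t₂ (Sum.inl : Alph → Alph ⊕ ℕ)).not.2 ht₂) _ _
      profile_comp_letter_inr ?_ ?_
    · rw [TS.subT_map]
      exact TS.absDen_eq_top_of_mem_image_map_inl htTempty htε
    · rw [TS.subP_map]
      exact Set.mem_image_of_mem _ hmem
  · refine PS.exists_illOrdered_of_pair_mem (t₁ := t₁.map Sum.inl)
      ((TS.map_eq_eps_iff t₂ (Sum.inl : Alph → Alph ⊕ ℕ)).not.2 ht₂) _ _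
      profile_comp_letter_inr ?_ ?_
    · rw [PS.subT_map]
      exact TS.absDen_eq_top_of_mem_image_map_inl hpTempty hpε
    · rw [PS.subP_map]
      exact Set.mem_image_of_mem _ hmem
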